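/- Let f(t,s,r)=γ(t)+sX(t)+rY(t) be a pseudo-non-degenerate two-ruled hypersurface in ℝ⁴ (normalized) with a'(t)≠0 for all t near 0. Set γ̃=γ−b₃X and X̃=(−aX+Y)/|−aX+Y|. Then γ̃'=(b₁−b₃')X+b₂Y+b₄Z, ⟨X̃',X̃'⟩=(a')²/(a²+1)² and ⟨γ̃',X̃'⟩=−a'ω/(a²+1)^{3/2} with ω=ab₂+b₁−b₃'; consequently the striction curve of the non-cylindrical ruled surface σ₁(t,r)=γ̃(t)+rX̃(t), given by r(t)=−⟨γ̃',X̃'⟩/⟨X̃',X̃'⟩, is σ₂(t)=γ̃(t)+(ω(t)(a(t)²+1)^{1/2}/a'(t))X̃(t). -/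

import Mathlib

open scoped Topology
open Filter

noncomputable section

/-- Ambient space `ℝ⁴`. -/
abbrev E4 := Fin 4 → ℝ

/-- The standard inner product on `ℝ⁴`. -/
def dot4 (u v : E4) : ℝ := ∑ i, u i * v i

/-- `det(u,v,w,x)` for four vectors of `ℝ⁴`. -/
def det4 (u v w x : E4) : ℝ := Matrix.det (Matrix.of ![u, v, w, x])

/-- The triple exterior (cross) product `u ∧ v ∧ w` in `ℝ⁴`. -/
def tcross (u v w : E4) : E4 := fun i => det4 (Pi.single i 1) u v w


lemma dot4_add_left (u v w : E4) : dot4 (u + v) w = dot4 u w + dot4 v w := by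
  simp [dot4, add_mul, Finset.sum_add_distrib]
lemma dot4_add_right (u v w : E4) : dot4 u (v + w) = dot4 u v + dot4 u w := by
  simp [dot4, mul_add, Finset.sum_add_distrib]
lemma dot4_smul_left (c : ℝ) (u v : E4) : dot4 (c • u) v = c * dot4 u v := by
  simp [dot4, Finset.mul_sum, mul_assoc]
lemma dot4_smul_right (c : ℝ) (u v : E4) : dot4 u (c • v) = c * dot4 u v := by
  simp only [dot4, Finset.mul_sum, Pi.smul_apply, smul_eq_mul]; congr 1; ext i; ring
lemma dot4_comm (u v : E4) : dot4 u v = dot4 v u := by simp [dot4, mul_comm]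
lemma dot4_neg_left (u v : E4) : dot4 (-u) v = -dot4 u v := by
  simp [dot4, Finset.sum_neg_distrib]
lemma dot4_neg_right (u v : E4) : dot4 u (-v) = -dot4 u v := by
  simp [dot4, Finset.sum_neg_distrib]
lemma dot4_tcross_fst (u v w : E4) : dot4 (tcross u v w) u = 0 := by
  simp [dot4, tcross, det4, Matrix.det_succ_row_zero, Fin.sum_univ_succ, Pi.single_apply,
    show (Fin.succAbove 1 2 : Fin 4) = 3 by decide, show (Fin.succAbove 2 2 : Fin 4) = 3 by decide,
    show (Fin.succ 2 : Fin 4) = 3 by decide, show (Fin.castSucc 2 : Fin 4) = 2 by decide,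
    show (Fin.succAbove 3 2 : Fin 4) = 2 by decide]
  ring
lemma dot4_tcross_snd (u v w : E4) : dot4 (tcross u v w) v = 0 := by
  simp [dot4, tcross, det4, Matrix.det_succ_row_zero, Fin.sum_univ_succ, Pi.single_apply,
    show (Fin.succAbove 1 2 : Fin 4) = 3 by decide, show (Fin.succAbove 2 2 : Fin 4) = 3 by decide,
    show (Fin.succ 2 : Fin 4) = 3 by decide, show (Fin.castSucc 2 : Fin 4) = 2 by decide,
    show (Fin.succAbove 3 2 : Fin 4) = 2 by decide]
  ring


/-- For a pseudo-non-degenerate two-ruled hypersurface (normalized) with `a' ≠ 0` near `0`,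
setting `γ̃ = γ − b₃X` and `X̃ = (−aX+Y)/|−aX+Y|`, one has
`γ̃' = (b₁−b₃')X + b₂Y + b₄Z`, `⟨X̃',X̃'⟩ = (a')²/(a²+1)²`,
`⟨γ̃',X̃'⟩ = −a'ω/(a²+1)^{3/2}` with `ω = ab₂+b₁−b₃'`; consequently the striction curve
of `σ₁(t,r) = γ̃(t)+rX̃(t)`, given by `r(t) = −⟨γ̃',X̃'⟩/⟨X̃',X̃'⟩`, is
`σ₂(t) = γ̃(t) + (ω(a²+1)^{1/2}/a')X̃(t)`. -/
theorem stmt6 (γ X Y : ℝ → E4) (a b₁ b₂ b₃ b₄ : ℝ → ℝ)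
    (hγ : ContDiff ℝ (⊤ : ℕ∞) γ) (hX : ContDiff ℝ (⊤ : ℕ∞) X) (hY : ContDiff ℝ (⊤ : ℕ∞) Y)
    (ha : ContDiff ℝ (⊤ : ℕ∞) a) (hb₁ : ContDiff ℝ (⊤ : ℕ∞) b₁) (hb₂ : ContDiff ℝ (⊤ : ℕ∞) b₂)
    (hb₃ : ContDiff ℝ (⊤ : ℕ∞) b₃) (hb₄ : ContDiff ℝ (⊤ : ℕ∞) b₄)
    -- constrictively adapted director curves
    (hXunit : ∀ᶠ t in 𝓝 (0:ℝ), dot4 (X t) (X t) = 1)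
    (hYunit : ∀ᶠ t in 𝓝 (0:ℝ), dot4 (Y t) (Y t) = 1)
    (hXY : ∀ᶠ t in 𝓝 (0:ℝ), dot4 (X t) (Y t) = 0)
    (hXY' : ∀ᶠ t in 𝓝 (0:ℝ), dot4 (X t) (deriv Y t) = 0)
    -- normalization
    (hspan : ∀ᶠ t in 𝓝 (0:ℝ), LinearIndependent ℝ ![X t, Y t, deriv X t])
    (hX'unit : ∀ᶠ t in 𝓝 (0:ℝ), dot4 (deriv X t) (deriv X t) = 1)
    -- structure functions
    (hY' : ∀ᶠ t in 𝓝 (0:ℝ), deriv Y t = a t • deriv X t)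
    (hγ' : ∀ᶠ t in 𝓝 (0:ℝ), deriv γ t =
      b₁ t • X t + b₂ t • Y t + b₃ t • deriv X t +
        b₄ t • tcross (X t) (Y t) (deriv X t))
    -- non-cylindrical: a' ≠ 0 near 0
    (ha' : ∀ᶠ t in 𝓝 (0:ℝ), deriv a t ≠ 0)
    (γtil Xtil : ℝ → E4) (ω : ℝ → ℝ)
    (hγtil : γtil = fun t => γ t - b₃ t • X t)
    (hXtil : Xtil = fun t =>
      (Real.sqrt (dot4 (-(a t) • X t + Y t) (-(a t) • X t + Y t)))⁻¹ •
        (-(a t) • X t + Y t))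
    (hω : ω = fun t => a t * b₂ t + b₁ t - deriv b₃ t) :
    ∀ᶠ t in 𝓝 (0:ℝ),
      deriv γtil t = (b₁ t - deriv b₃ t) • X t + b₂ t • Y t +
        b₄ t • tcross (X t) (Y t) (deriv X t) ∧
      dot4 (deriv Xtil t) (deriv Xtil t) = (deriv a t)^2 / ((a t)^2 + 1)^2 ∧
      dot4 (deriv γtil t) (deriv Xtil t) =
        -(deriv a t) * ω t / (((a t)^2 + 1) * Real.sqrt ((a t)^2 + 1)) ∧
      γtil t + (-(dot4 (deriv γtil t) (deriv Xtil t)) /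
          dot4 (deriv Xtil t) (deriv Xtil t)) • Xtil t =
        γtil t + ((ω t * Real.sqrt ((a t)^2 + 1)) / deriv a t) • Xtil t := by
  have hXd : Differentiable ℝ X := hX.differentiable (by simp)
  have hYd : Differentiable ℝ Y := hY.differentiable (by simp)
  have hγd : Differentiable ℝ γ := hγ.differentiable (by simp)
  have had : Differentiable ℝ a := ha.differentiable (by simp)
  have hb₃d : Differentiable ℝ b₃ := hb₃.differentiable (by simp)
  have H := hXunit.and (hYunit.and (hXY.and (hX'unit.and (hY'.and (hγ'.and ha')))))
  rw [eventually_nhds_iff] at H ⊢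
  obtain ⟨U, hU, hUopen, hU0⟩ := H
  refine ⟨U, ?_, hUopen, hU0⟩
  intro t ht
  obtain ⟨hXXt, hYYt, hXYt, hX'X't, hY't, hγ't, ha't⟩ := hU t ht
  have hYXt : dot4 (Y t) (X t) = 0 := by rw [dot4_comm]; exact hXYt
  set A := a t with hA
  set A' := deriv a t with hA'
  have hApos : (0:ℝ) < A^2 + 1 := by positivity
  set s := Real.sqrt (A^2+1) with hs
  have hspos : 0 < s := Real.sqrt_pos.2 hApos
  have hsne : s ≠ 0 := ne_of_gt hspos
  have hs2 : s^2 = A^2 + 1 := Real.sq_sqrt hApos.le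
  -- part 1
  have hderγtil : HasDerivAt γtil
      (deriv γ t - (b₃ t • deriv X t + deriv b₃ t • X t)) t := by
    rw [hγtil]
    exact (hγd t).hasDerivAt.sub (((hb₃d t).hasDerivAt.smul (hXd t).hasDerivAt))
  have part1 : deriv γtil t = (b₁ t - deriv b₃ t) • X t + b₂ t • Y t +
      b₄ t • tcross (X t) (Y t) (deriv X t) := by
    rw [hderγtil.deriv, hγ't]
    module
  -- derivative of the normalizing factor
  have h1 : HasDerivAt (fun u => a u^2 + 1) (2 * A * A') t := by
    have h := ((had t).hasDerivAt.pow 2).add_const 1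
    refine h.congr_deriv ?_
    push_cast; ring
  have h2 : HasDerivAt (fun u => Real.sqrt (a u^2+1)) (A * A' / s) t := by
    have h3 := (Real.hasDerivAt_sqrt (ne_of_gt hApos)).comp t h1
    refine h3.congr_deriv ?_
    field_simp; ring
  have hq : HasDerivAt (fun u => (Real.sqrt (a u^2+1))⁻¹) (-(A * A') / s^3) t := by
    have h4 := h2.inv hsne
    refine h4.congr_deriv ?_
    rw [← hA, ← hs]
    field_simp
  -- Xtil locally equals a nicer function
  have hXtilEq : Xtil =ᶠ[𝓝 t] fun u =>
      (-(a u) * (Real.sqrt (a u^2+1))⁻¹) • X u + (Real.sqrt (a u^2+1))⁻¹ • Y u := by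
    filter_upwards [hUopen.mem_nhds ht] with u hu
    obtain ⟨hXXu, hYYu, hXYu, -, -, -, -⟩ := hU u hu
    have hYXu : dot4 (Y u) (X u) = 0 := by rw [dot4_comm]; exact hXYu
    have hd : dot4 (-(a u) • X u + Y u) (-(a u) • X u + Y u) = a u^2 + 1 := by
      simp [dot4_add_left, dot4_add_right, dot4_smul_left, dot4_smul_right,
        dot4_neg_left, dot4_neg_right, hXXu, hYYu, hXYu, hYXu]
      ring
    rw [hXtil]
    simp only [hd]
    module
  have hg : HasDerivAt (fun u =>
      (-(a u) * (Real.sqrt (a u^2+1))⁻¹) • X u + (Real.sqrt (a u^2+1))⁻¹ • Y u)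
      (((-A * s⁻¹) • deriv X t + (-A' * s⁻¹ + -A * (-(A * A')/s^3)) • X t)
        + (s⁻¹ • deriv Y t + (-(A * A')/s^3) • Y t)) t := by
    exact (((had t).hasDerivAt.neg.mul hq).smul (hXd t).hasDerivAt).add
      (hq.smul (hYd t).hasDerivAt)
  clear_value A A' s
  have hXtilD : deriv Xtil t = (-A'/s^3) • X t + (-(A * A')/s^3) • Y t := by
    rw [hXtilEq.deriv_eq, hg.deriv, hY't]
    match_scalars
    all_goals field_simp
    · linear_combination
    · linear_combination (-1 : ℝ) * hs2
  have part2 : dot4 (deriv Xtil t) (deriv Xtil t) = A'^2 / (A^2+1)^2 := by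
    rw [hXtilD]
    simp only [dot4_add_left, dot4_add_right, dot4_smul_left, dot4_smul_right,
      hXXt, hYYt, hXYt, hYXt]
    rw [← hs2]
    field_simp
    linear_combination (-1 : ℝ) * hs2
  have part3 : dot4 (deriv γtil t) (deriv Xtil t) =
      -A' * ω t / ((A^2+1) * s) := by
    rw [part1, hXtilD, hω]
    simp only [dot4_add_left, dot4_add_right, dot4_smul_left, dot4_smul_right,
      hXXt, hYYt, hXYt, hYXt, dot4_tcross_fst, dot4_tcross_snd]
    field_simp
    linear_combination (b₁ t - deriv b₃ t + b₂ t * A) * hs2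
      + (-(b₂ t * s^2)) * hA
  refine ⟨part1, part2, part3, ?_⟩
  have key : -(dot4 (deriv γtil t) (deriv Xtil t)) / dot4 (deriv Xtil t) (deriv Xtil t)
      = ω t * s / A' := by
    rw [part2, part3]
    field_simp
    linear_combination (-ω t) * hs2
  rw [key]
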